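/- If ∑_{n=1}^∞ a_n n^{-ns} converges for all s > 0 and tends to L as s → 0⁺ (Lindelöf summability), and n·|a_n| → 0, then ∑_{n=1}^∞ a_n converges to L. -/

import Mathlib

open Filter Real Topology

private lemma one_sub_exp_neg_le (x : ℝ) : 1 - Real.exp (-x) ≤ x := by
  have := Real.add_one_le_exp (-x)
  linarith

/-- Tauberian theorem for Lindelöf summability:
means `∑_{n≥1} a_n n^{-ns}`, condition `n |a_n| → 0`. -/
theorem lindelof_tauber_o
    (a : ℕ → ℝ) (g : ℝ → ℝ) (L : ℝ)
    (hconv : ∀ s : ℝ, 0 < s →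
      Tendsto (fun N => ∑ n ∈ Finset.range N,
          a (n + 1) * ((n + 1 : ℝ) ^ (-(n + 1 : ℝ) * s)))
        atTop (𝓝 (g s)))
    (hlim : Tendsto g (𝓝[>] (0 : ℝ)) (𝓝 L))
    (htauber : Tendsto (fun n : ℕ => (n : ℝ) * |a n|) atTop (𝓝 0)) :
    Tendsto (fun N => ∑ n ∈ Finset.range N, a (n + 1)) atTop (𝓝 L) := by
  rw [Metric.tendsto_atTop]
  intro ε hε
  set s : ℕ → ℝ := fun N => ((N : ℝ) * Real.log N)⁻¹ with hsdef
  -- shifted Tauberian hypothesis and its Cesàro average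
  have htau' : Tendsto (fun n : ℕ => ((n : ℝ) + 1) * |a (n + 1)|) atTop (𝓝 0) := by
    have h := htauber.comp (tendsto_add_atTop_nat 1)
    refine h.congr fun n => ?_
    simp only [Function.comp_apply]
    push_cast
    ring
  have hces := htau'.cesaro
  have E1 : ∀ᶠ N : ℕ in atTop,
      (N : ℝ)⁻¹ * ∑ n ∈ Finset.range N, (((n : ℝ) + 1) * |a (n + 1)|) < ε / 4 :=
    hces.eventually_lt_const (by positivity)
  have E2 : ∀ᶠ n : ℕ in atTop, (n : ℝ) * |a n| < ε / 8 :=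
    htauber.eventually_lt_const (by positivity)
  -- s N → 0 within (0, ∞)
  have hx : Tendsto (fun N : ℕ => (N : ℝ) * Real.log N) atTop atTop :=
    tendsto_natCast_atTop_atTop.atTop_mul_atTop₀
      (Real.tendsto_log_atTop.comp tendsto_natCast_atTop_atTop)
  have hs0 : Tendsto s atTop (𝓝[>] (0 : ℝ)) := by
    apply tendsto_nhdsWithin_of_tendsto_nhds_of_eventually_within
    · exact tendsto_inv_atTop_zero.comp hx
    · filter_upwards [hx.eventually_gt_atTop 0] with N hN
      exact inv_pos.2 hN
  have E3 : ∀ᶠ N : ℕ in atTop, |g (s N) - L| < ε / 4 := by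
    have h := (hlim.comp hs0).eventually (Metric.ball_mem_nhds L (show (0:ℝ) < ε / 4 by positivity))
    simpa [Function.comp, Real.dist_eq] using h
  have E4 : ∀ᶠ N : ℕ in atTop, 2 ≤ N := eventually_ge_atTop 2
  obtain ⟨N₁, h₁⟩ := eventually_atTop.1 ((E1.and E3).and E4)
  obtain ⟨N₂, h₂⟩ := eventually_atTop.1 E2
  refine ⟨max N₁ N₂, fun N hN => ?_⟩
  obtain ⟨⟨hE1, hE3⟩, hN2⟩ := h₁ N (le_trans (le_max_left _ _) hN)
  have hNN₂ : N₂ ≤ N := le_trans (le_max_right _ _) hN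
  rw [Real.dist_eq]
  -- basic positivity facts
  have hNR : (2 : ℝ) ≤ (N : ℝ) := by exact_mod_cast hN2
  have hNpos : (0 : ℝ) < N := by linarith
  have hlogN : 0 < Real.log N := Real.log_pos (by linarith)
  set σ := s N with hσdef
  have hσpos : 0 < σ := inv_pos.2 (by positivity)
  have hσlog : σ * Real.log N = (N : ℝ)⁻¹ := by
    rw [hσdef, hsdef]
    field_simp
  -- weight facts
  have hwexp : ∀ n : ℕ,
      ((n : ℝ) + 1) ^ (-((n : ℝ) + 1) * σ)
        = Real.exp (-(((n : ℝ) + 1) * σ * Real.log ((n : ℝ) + 1))) := by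
    intro n
    rw [Real.rpow_def_of_pos (by positivity)]
    ring_nf
  have hwle1 : ∀ n : ℕ, ((n : ℝ) + 1) ^ (-((n : ℝ) + 1) * σ) ≤ 1 := by
    intro n
    apply Real.rpow_le_one_of_one_le_of_nonpos (by norm_num)
    have : (0 : ℝ) ≤ ((n : ℝ) + 1) * σ := by positivity
    linarith
  have hwpos : ∀ n : ℕ, 0 < ((n : ℝ) + 1) ^ (-((n : ℝ) + 1) * σ) := by
    intro n; exact Real.rpow_pos_of_pos (by positivity) _
  set P : ℕ → ℝ := fun M => ∑ n ∈ Finset.range M,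
      a (n + 1) * ((n + 1 : ℝ) ^ (-(n + 1 : ℝ) * σ)) with hPdef
  have hconvσ : Tendsto P atTop (𝓝 (g σ)) := hconv σ hσpos
  set S : ℕ → ℝ := fun M => ∑ n ∈ Finset.range M, a (n + 1) with hSdef
  -- front estimate
  have hfront : |S N - P N| ≤ (N : ℝ)⁻¹ * ∑ n ∈ Finset.range N, (((n : ℝ) + 1) * |a (n + 1)|) := by
    have hdiff : S N - P N = ∑ n ∈ Finset.range N,
        a (n + 1) * (1 - ((n : ℝ) + 1) ^ (-((n : ℝ) + 1) * σ)) := by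
      rw [hSdef, hPdef, ← Finset.sum_sub_distrib]
      exact Finset.sum_congr rfl fun n _ => by ring
    rw [hdiff]
    calc |∑ n ∈ Finset.range N, a (n + 1) * (1 - ((n : ℝ) + 1) ^ (-((n : ℝ) + 1) * σ))|
        ≤ ∑ n ∈ Finset.range N, |a (n + 1) * (1 - ((n : ℝ) + 1) ^ (-((n : ℝ) + 1) * σ))| :=
          Finset.abs_sum_le_sum_abs _ _
      _ ≤ ∑ n ∈ Finset.range N, (N : ℝ)⁻¹ * (((n : ℝ) + 1) * |a (n + 1)|) := by
          apply Finset.sum_le_sum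
          intro n hn
          have hnN : (n : ℝ) + 1 ≤ (N : ℝ) := by
            have := Finset.mem_range.1 hn
            exact_mod_cast Nat.succ_le_of_lt this
          have hn0 : (0:ℝ) ≤ (n:ℝ) := Nat.cast_nonneg n
          have hln0 : 0 ≤ Real.log ((n : ℝ) + 1) := Real.log_nonneg (by linarith)
          have hlnle : Real.log ((n : ℝ) + 1) ≤ Real.log N :=
            Real.log_le_log (by positivity) hnN
          have hw1 := hwle1 n
          have h1w : 1 - ((n : ℝ) + 1) ^ (-((n : ℝ) + 1) * σ)
              ≤ ((n : ℝ) + 1) * σ * Real.log ((n : ℝ) + 1) := by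
            rw [hwexp n]
            exact one_sub_exp_neg_le _
          rw [abs_mul, abs_of_nonneg (by linarith : (0:ℝ) ≤ 1 - ((n : ℝ) + 1) ^ (-((n : ℝ) + 1) * σ))]
          calc |a (n + 1)| * (1 - ((n : ℝ) + 1) ^ (-((n : ℝ) + 1) * σ))
              ≤ |a (n + 1)| * (((n : ℝ) + 1) * σ * Real.log N) := by
                apply mul_le_mul_of_nonneg_left _ (abs_nonneg _)
                refine le_trans h1w ?_
                apply mul_le_mul_of_nonneg_left hlnle (by positivity)
            _ = (((n : ℝ) + 1) * |a (n + 1)|) * (σ * Real.log N) := by ring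
            _ = (N : ℝ)⁻¹ * (((n : ℝ) + 1) * |a (n + 1)|) := by rw [hσlog]; ring
      _ = (N : ℝ)⁻¹ * ∑ n ∈ Finset.range N, (((n : ℝ) + 1) * |a (n + 1)|) :=
          (Finset.mul_sum _ _ _).symm
  -- tail / middle estimate
  have hmid : |g σ - P N| ≤ ε / 4 := by
    have ht : Tendsto (fun M => |P M - P N|) atTop (𝓝 |g σ - P N|) :=
      (hconvσ.sub tendsto_const_nhds).abs
    apply le_of_tendsto ht
    filter_upwards [eventually_ge_atTop N] with M hM
    set r := Real.exp (-(N : ℝ)⁻¹) with hrdef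
    have hr0 : (0 : ℝ) ≤ r := (Real.exp_pos _).le
    have hr1 : r < 1 := by
      rw [hrdef]
      apply Real.exp_lt_one_iff.2
      simp [hNpos.ne']
      positivity
    have hrle : r ≤ (1 + (N : ℝ)⁻¹)⁻¹ := by
      rw [hrdef, Real.exp_neg]
      apply inv_anti₀ (by positivity)
      have := Real.add_one_le_exp ((N : ℝ)⁻¹)
      linarith
    have hsub : (2 * (N : ℝ))⁻¹ ≤ 1 - r := by
      have hA : (1 + (N : ℝ)⁻¹)⁻¹ = (N : ℝ) / ((N : ℝ) + 1) := by
        field_simp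
      rw [hA] at hrle
      have h2 : 1 - (N:ℝ)/((N:ℝ)+1) = 1/((N:ℝ)+1) := by field_simp; ring
      have h3 : (2*(N:ℝ))⁻¹ ≤ 1/((N:ℝ)+1) := by
        rw [inv_eq_one_div]
        exact one_div_le_one_div_of_le (by positivity) (by linarith)
      linarith
    have hPMN : P M - P N = ∑ n ∈ Finset.Ico N M,
        a (n + 1) * ((n + 1 : ℝ) ^ (-(n + 1 : ℝ) * σ)) :=
      (Finset.sum_Ico_eq_sub _ hM).symm
    rw [hPMN]
    calc |∑ n ∈ Finset.Ico N M, a (n + 1) * ((n + 1 : ℝ) ^ (-(n + 1 : ℝ) * σ))|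
        ≤ ∑ n ∈ Finset.Ico N M, |a (n + 1) * ((n + 1 : ℝ) ^ (-(n + 1 : ℝ) * σ))| :=
          Finset.abs_sum_le_sum_abs _ _
      _ ≤ ∑ n ∈ Finset.Ico N M, ε / 8 * (N : ℝ)⁻¹ * r ^ n := by
          apply Finset.sum_le_sum
          intro n hn
          have hNn : N ≤ n := (Finset.mem_Ico.1 hn).1
          have hNnR : (N : ℝ) ≤ (n : ℝ) + 1 := by
            have : (N : ℝ) ≤ (n : ℝ) := by exact_mod_cast hNn
            linarith
          -- |a (n+1)| ≤ (ε/8) / (n+1)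
          have htail : ((n : ℝ) + 1) * |a (n + 1)| ≤ ε / 8 := by
            have h := h₂ (n + 1) (le_trans hNN₂ (by omega))
            push_cast at h
            linarith
          have habs : |a (n + 1)| ≤ ε / 8 / ((n : ℝ) + 1) := by
            rw [le_div_iff₀ (by positivity)]
            linarith [htail]
          -- weight bound
          have hexppt : ((n : ℝ) + 1) * (N : ℝ)⁻¹ ≤ ((n : ℝ) + 1) * σ * Real.log ((n : ℝ) + 1) := by
            have hlog : Real.log (N : ℝ) ≤ Real.log ((n : ℝ) + 1) :=
              Real.log_le_log hNpos hNnR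
            nlinarith [mul_le_mul_of_nonneg_left hlog (by positivity : (0:ℝ) ≤ ((n : ℝ) + 1) * σ),
              hσlog]
          have hwb : ((n : ℝ) + 1) ^ (-((n : ℝ) + 1) * σ) ≤ r ^ (n + 1) := by
            rw [hwexp n, hrdef, ← Real.exp_nat_mul]
            apply Real.exp_le_exp.2
            push_cast
            nlinarith [hexppt]
          have hr' : r ^ (n + 1) ≤ r ^ n := pow_le_pow_of_le_one hr0 hr1.le (Nat.le_succ n)
          rw [abs_mul, abs_of_pos (hwpos n)]
          calc |a (n + 1)| * ((n : ℝ) + 1) ^ (-((n : ℝ) + 1) * σ)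
              ≤ (ε / 8 / ((n : ℝ) + 1)) * r ^ n := by
                apply mul_le_mul habs (le_trans hwb hr') (hwpos n).le (by positivity)
            _ ≤ ε / 8 * (N : ℝ)⁻¹ * r ^ n := by
                apply mul_le_mul_of_nonneg_right _ (pow_nonneg hr0 n)
                rw [div_eq_mul_inv]
                exact mul_le_mul_of_nonneg_left
                  (inv_anti₀ hNpos hNnR) (by positivity)
      _ = ε / 8 * (N : ℝ)⁻¹ * ∑ n ∈ Finset.Ico N M, r ^ n := (Finset.mul_sum _ _ _).symm
      _ ≤ ε / 8 * (N : ℝ)⁻¹ * (2 * N) := by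
          apply mul_le_mul_of_nonneg_left _ (by positivity)
          calc ∑ n ∈ Finset.Ico N M, r ^ n
              ≤ ∑ n ∈ Finset.range M, r ^ n := by
                apply Finset.sum_le_sum_of_subset_of_nonneg
                · intro x hx
                  simp only [Finset.mem_Ico] at hx
                  exact Finset.mem_range.2 hx.2
                · intro i _ _; exact pow_nonneg hr0 i
            _ ≤ ∑' n : ℕ, r ^ n :=
                Summable.sum_le_tsum _ (fun i _ => pow_nonneg hr0 i)
                  (summable_geometric_of_lt_one hr0 hr1)
            _ = (1 - r)⁻¹ := tsum_geometric_of_lt_one hr0 hr1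
            _ ≤ 2 * N := by
                have h2N : (0:ℝ) < 2 * N := by positivity
                calc (1 - r)⁻¹ ≤ ((2 * (N:ℝ))⁻¹)⁻¹ :=
                      inv_anti₀ (by positivity) hsub
                  _ = 2 * N := inv_inv _
      _ = ε / 4 := by
          field_simp
          ring
  -- combine
  have hfront' : |S N - P N| < ε / 4 := lt_of_le_of_lt hfront hE1
  have hE3' : |g σ - L| < ε / 4 := hE3
  calc |S N - L| = |(S N - P N) + (P N - g σ) + (g σ - L)| := by ring_nf
    _ ≤ |(S N - P N) + (P N - g σ)| + |g σ - L| := abs_add_le _ _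
    _ ≤ |S N - P N| + |P N - g σ| + |g σ - L| := by linarith [abs_add_le (S N - P N) (P N - g σ)]
    _ < ε := by
        rw [abs_sub_comm (P N) (g σ)]
        linarith
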